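/- arXiv:1311.2509 — 2 statements merged into one kernel-verified Lean document; each statement's English description precedes it below -/
import Mathlib

section
/- Let V be a real inner product space of dimension 2m ≥ 6 with an orthogonal complex structure J, and let R be a curvature-like tensor on V such that R(X,Y,JX,JY) = 0 for all orthonormal X, Y ∈ V with ⟨X,JY⟩ = 0. Then the following are equivalent: (i) (constant type) λ(X,Y) = λ(X,Z) for all X, Y, Z ∈ V with ⟨X,Y⟩ = ⟨X,JY⟩ = 0, ⟨X,Z⟩ = ⟨X,JZ⟩ = 0 and ‖Y‖ = ‖Z‖; (ii) (constant anti-holomorphic sectional curvature) there exists α ∈ ℝ such that K(X,Y) = α for all orthonormal X, Y ∈ V with ⟨X,JY⟩ = 0. Moreover, when these hold, λ(X,Y) = α for every orthonormal pair X, Y with ⟨X,JY⟩ = 0; that is, the value of the constant type equals the constant anti-holomorphic sectional curvature. (This is the pointwise algebraic content of Theorem 4.1: an almost Hermitian manifold of dimension 2m ≥ 6 satisfying the axiom of co-holomorphic (2n+1)-spheres has pointwise constant type α if and only if it has pointwise constant anti-holomorphic sectional curvature α, the hypothesis R(X,Y,JX,JY) = 0 on anti-holomorphic pairs being what the axiom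 yields via Lemma 4.1.) -/
/-!
On anti-holomorphic pairs the hypothesis kills `R(X,Y,JX,JY)`, so `λ = K` there. Constant type
then says that `K(X,Y)` does not depend on the unit vector `Y`; since `K(X,Y) = K(Y,X)`, it does
not depend on `X` either, and two unit anti-holomorphic pairs `(X,Y)`, `(X',Y')` are linked
through a unit vector `W` anti-holomorphic to both `X` and `X'`, which exists once `dim V ≥ 5`.
Conversely, `λ(X,Y)` and `‖X‖²‖Y‖²α` are both biquadratic in `(X,Y)`, so they agree on all
anti-holomorphic pairs as soon as they agree on the unit ones.
-/

open scoped RealInnerProductSpace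
open Module

section

variable {V : Type*} [NormedAddCommGroup V] [InnerProductSpace ℝ V]

theorem exists_norm_eq_one_forall_inner_eq_zero [FiniteDimensional ℝ V] (s : Finset V)
    (hs : s.card < finrank ℝ V) : ∃ v : V, ‖v‖ = 1 ∧ ∀ u ∈ s, ⟪u, v⟫ = 0 := by
  set K := Submodule.span ℝ (s : Set V)
  have hK : Kᗮ ≠ ⊥ := by
    rw [Ne, Submodule.orthogonal_eq_bot_iff]
    intro hK
    have : finrank ℝ K ≤ s.card := finrank_span_finset_le_card s
    rw [hK, finrank_top] at this
    omega
  obtain ⟨v, hv, hv0⟩ := Submodule.exists_mem_ne_zero_of_ne_bot hK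
  refine ⟨‖v‖⁻¹ • v, norm_smul_inv_norm hv0, fun u hu => ?_⟩
  rw [inner_smul_right, Submodule.inner_right_of_mem_orthogonal (Submodule.subset_span hu) hv,
    mul_zero]

/-- `X` and `Y` span an anti-holomorphic plane for `J` when both are nonzero; zero vectors
satisfy it trivially. -/
def IsAntiholomorphic (J : V →ₗ[ℝ] V) (X Y : V) : Prop :=
  ⟪X, Y⟫ = 0 ∧ ⟪X, J Y⟫ = 0

section ComplexStructure

variable {J : V →ₗ[ℝ] V} (hJiso : ∀ X Y : V, ⟪J X, J Y⟫ = ⟪X, Y⟫) (hJ2 : ∀ X : V, J (J X) = -X)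
include hJiso hJ2

theorem inner_apply_right_eq_neg (X Y : V) : ⟪X, J Y⟫ = -⟪J X, Y⟫ := by
  rw [← hJiso X (J Y), hJ2, inner_neg_right]

theorem IsAntiholomorphic.symm {X Y : V} (h : IsAntiholomorphic J X Y) :
    IsAntiholomorphic J Y X := by
  refine ⟨(real_inner_comm X Y).trans h.1, ?_⟩
  rw [real_inner_comm, ← neg_eq_zero, ← inner_apply_right_eq_neg hJiso hJ2]
  exact h.2

theorem exists_norm_eq_one_isAntiholomorphic_and_isAntiholomorphic [FiniteDimensional ℝ V]
    (hd : 5 ≤ finrank ℝ V) (X X' : V) :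
    ∃ W : V, ‖W‖ = 1 ∧ IsAntiholomorphic J X W ∧ IsAntiholomorphic J X' W := by
  classical
  obtain ⟨W, hW, hperp⟩ := exists_norm_eq_one_forall_inner_eq_zero {X, J X, X', J X'}
    (Finset.card_le_four.trans_lt (by omega))
  have hanti : ∀ Z ∈ ({X, X'} : Set V), IsAntiholomorphic J Z W := by
    rintro Z hZ
    have hZ : Z ∈ ({X, J X, X', J X'} : Finset V) ∧ J Z ∈ ({X, J X, X', J X'} : Finset V) := by
      rcases hZ with rfl | rfl <;> simp
    refine ⟨hperp Z hZ.1, ?_⟩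
    rw [inner_apply_right_eq_neg hJiso hJ2, hperp (J Z) hZ.2, neg_zero]
  exact ⟨W, hW, hanti X (by simp), hanti X' (by simp)⟩

theorem eq_of_isAntiholomorphic_of_comm [FiniteDimensional ℝ V] (hd : 5 ≤ finrank ℝ V)
    {K : V → V → ℝ} (hcomm : ∀ X Y, K X Y = K Y X)
    (hright : ∀ X Y Y', ‖X‖ = 1 → ‖Y‖ = 1 → ‖Y'‖ = 1 →
      IsAntiholomorphic J X Y → IsAntiholomorphic J X Y' → K X Y = K X Y')
    {X Y X' Y' : V} (hX : ‖X‖ = 1) (hY : ‖Y‖ = 1) (hX' : ‖X'‖ = 1) (hY' : ‖Y'‖ = 1)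
    (h : IsAntiholomorphic J X Y) (h' : IsAntiholomorphic J X' Y') : K X Y = K X' Y' := by
  obtain ⟨W, hW, hXW, hX'W⟩ := exists_norm_eq_one_isAntiholomorphic_and_isAntiholomorphic
    hJiso hJ2 hd X X'
  calc K X Y = K X W := hright X Y W hX hY hW h hXW
    _ = K W X := hcomm X W
    _ = K W X' := hright W X X' hW hX hX' (hXW.symm hJiso hJ2) (hX'W.symm hJiso hJ2)
    _ = K X' W := hcomm W X'
    _ = K X' Y' := (hright X' Y' W hX' hY' hW h' hX'W).symm

end ComplexStructure

theorem IsAntiholomorphic.smul {J : V →ₗ[ℝ] V} {X Y : V} (h : IsAntiholomorphic J X Y)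
    (a b : ℝ) : IsAntiholomorphic J (a • X) (b • Y) := by
  refine ⟨?_, ?_⟩ <;>
    simp only [map_smul, real_inner_smul_left, real_inner_smul_right, h.1, h.2, mul_zero]

theorem eq_norm_sq_mul_norm_sq_mul_of_isAntiholomorphic {J : V →ₗ[ℝ] V} {Q : V → V → ℝ}
    (hQ : ∀ (a b : ℝ) X Y, Q (a • X) (b • Y) = (a * b) ^ 2 * Q X Y) {c : ℝ}
    (hc : ∀ X Y, ‖X‖ = 1 → ‖Y‖ = 1 → IsAntiholomorphic J X Y → Q X Y = c)
    {X Y : V} (h : IsAntiholomorphic J X Y) : Q X Y = ‖X‖ ^ 2 * ‖Y‖ ^ 2 * c := by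
  rcases eq_or_ne X 0 with rfl | hX
  · simpa using hQ 0 1 0 Y
  rcases eq_or_ne Y 0 with rfl | hY
  · simpa using hQ 1 0 X 0
  have hx : ‖X‖ • (‖X‖⁻¹ • X) = X := smul_inv_smul₀ (norm_ne_zero_iff.2 hX) X
  have hy : ‖Y‖ • (‖Y‖⁻¹ • Y) = Y := smul_inv_smul₀ (norm_ne_zero_iff.2 hY) Y
  calc Q X Y = Q (‖X‖ • (‖X‖⁻¹ • X)) (‖Y‖ • (‖Y‖⁻¹ • Y)) := by rw [hx, hy]
    _ = (‖X‖ * ‖Y‖) ^ 2 * c := by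
      rw [hQ, hc (‖X‖⁻¹ • X) (‖Y‖⁻¹ • Y) (norm_smul_inv_norm hX) (norm_smul_inv_norm hY)
        (h.smul _ _)]
    _ = ‖X‖ ^ 2 * ‖Y‖ ^ 2 * c := by ring

section Curvature

variable (R : V →ₗ[ℝ] V →ₗ[ℝ] V →ₗ[ℝ] V →ₗ[ℝ] ℝ)

theorem sectional_comm (hR1 : ∀ X Y Z U : V, R X Y Z U = -R Y X Z U)
    (hR2 : ∀ X Y Z U : V, R X Y Z U = -R X Y U Z) (X Y : V) : R X Y X Y = R Y X Y X := by
  rw [hR1, hR2, neg_neg]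

theorem apply_smul_smul_smul_smul (a b : ℝ) (X Y Z U : V) :
    R (a • X) (b • Y) (a • Z) (b • U) = (a * b) ^ 2 * R X Y Z U := by
  simp only [map_smul, LinearMap.smul_apply, smul_eq_mul]
  ring

end Curvature

end

theorem constant_type_iff_constant_antiholomorphic_sectional_curvature_general
    {V : Type*} [NormedAddCommGroup V] [InnerProductSpace ℝ V] [FiniteDimensional ℝ V]
    {m : ℕ} (hm : 3 ≤ m) (hdim : Module.finrank ℝ V = 2 * m)
    (J : V →ₗ[ℝ] V)
    (hJiso : ∀ X Y : V, ⟪J X, J Y⟫ = ⟪X, Y⟫)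
    (hJ2 : ∀ X : V, J (J X) = -X)
    (R : V →ₗ[ℝ] V →ₗ[ℝ] V →ₗ[ℝ] V →ₗ[ℝ] ℝ)
    (hR1 : ∀ X Y Z U : V, R X Y Z U = -R Y X Z U)
    (hR2 : ∀ X Y Z U : V, R X Y Z U = -R X Y U Z)
    (hax : ∀ X Y : V, ‖X‖ = 1 → ‖Y‖ = 1 → ⟪X, Y⟫ = 0 → ⟪X, J Y⟫ = 0 →
      R X Y (J X) (J Y) = 0) :
    ((∀ X Y Z : V, ⟪X, Y⟫ = 0 → ⟪X, J Y⟫ = 0 → ⟪X, Z⟫ = 0 → ⟪X, J Z⟫ = 0 → ‖Y‖ = ‖Z‖ →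
        R X Y X Y - R X Y (J X) (J Y) = R X Z X Z - R X Z (J X) (J Z)) ↔
      (∃ α : ℝ, ∀ X Y : V, ‖X‖ = 1 → ‖Y‖ = 1 → ⟪X, Y⟫ = 0 → ⟪X, J Y⟫ = 0 →
        R X Y X Y = α)) ∧
    (∀ α : ℝ, (∀ X Y : V, ‖X‖ = 1 → ‖Y‖ = 1 → ⟪X, Y⟫ = 0 → ⟪X, J Y⟫ = 0 →
        R X Y X Y = α) →
      ∀ X Y : V, ‖X‖ = 1 → ‖Y‖ = 1 → ⟪X, Y⟫ = 0 → ⟪X, J Y⟫ = 0 →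
        R X Y X Y - R X Y (J X) (J Y) = α) := by
  have hlamK : ∀ X Y : V, ‖X‖ = 1 → ‖Y‖ = 1 → ⟪X, Y⟫ = 0 → ⟪X, J Y⟫ = 0 →
      R X Y X Y - R X Y (J X) (J Y) = R X Y X Y := fun X Y hX hY hXY hXJY => by
    rw [hax X Y hX hY hXY hXJY, sub_zero]
  refine ⟨⟨fun htype => ?_, fun ⟨α, hα⟩ => ?_⟩,
    fun α hα X Y hX hY hXY hXJY => (hlamK X Y hX hY hXY hXJY).trans (hα X Y hX hY hXY hXJY)⟩
  · have hright : ∀ X Y Y' : V, ‖X‖ = 1 → ‖Y‖ = 1 → ‖Y'‖ = 1 → IsAntiholomorphic J X Y →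
        IsAntiholomorphic J X Y' → R X Y X Y = R X Y' X Y' := fun X Y Y' hX hY hY' h h' => by
      rw [← hlamK X Y hX hY h.1 h.2, ← hlamK X Y' hX hY' h'.1 h'.2,
        htype X Y Y' h.1 h.2 h'.1 h'.2 (hY.trans hY'.symm)]
    by_cases hne : ∃ X Y : V, ‖X‖ = 1 ∧ ‖Y‖ = 1 ∧ IsAntiholomorphic J X Y
    · obtain ⟨X₀, Y₀, hX₀, hY₀, h₀⟩ := hne
      exact ⟨R X₀ Y₀ X₀ Y₀, fun X Y hX hY hXY hXJY =>
        eq_of_isAntiholomorphic_of_comm hJiso hJ2 (by omega) (sectional_comm R hR1 hR2) hright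
          hX hY hX₀ hY₀ ⟨hXY, hXJY⟩ h₀⟩
    · exact ⟨0, fun X Y hX hY hXY hXJY => (hne ⟨X, Y, hX, hY, hXY, hXJY⟩).elim⟩
  · have hlam : ∀ X Y : V, ⟪X, Y⟫ = 0 → ⟪X, J Y⟫ = 0 →
        R X Y X Y - R X Y (J X) (J Y) = ‖X‖ ^ 2 * ‖Y‖ ^ 2 * α := fun X Y hXY hXJY => by
      rw [eq_norm_sq_mul_norm_sq_mul_of_isAntiholomorphic (Q := fun X Y => R X Y X Y)
          (fun a b X Y => apply_smul_smul_smul_smul R a b X Y X Y)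
          (fun X Y hX hY h => hα X Y hX hY h.1 h.2) ⟨hXY, hXJY⟩,
        eq_norm_sq_mul_norm_sq_mul_of_isAntiholomorphic (Q := fun X Y => R X Y (J X) (J Y))
          (fun a b X Y => by simpa only [map_smul] using apply_smul_smul_smul_smul R a b X Y _ _)
          (fun X Y hX hY h => hax X Y hX hY h.1 h.2) ⟨hXY, hXJY⟩]
      ring
    intro X Y Z hXY hXJY hXZ hXJZ hYZ
    rw [hlam X Y hXY hXJY, hlam X Z hXZ hXJZ, hYZ]

/-- **Pointwise algebraic content of Theorem 4.1.**
Let `V` be a real inner product space of dimension `2m ≥ 6` with an orthogonal complex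
structure `J`, and let `R` be a curvature-like tensor on `V` such that
`R(X,Y,JX,JY) = 0` for all orthonormal `X, Y` with `⟪X, JY⟫ = 0`.  Then constant type
(i) is equivalent to constant anti-holomorphic sectional curvature (ii), and when these
hold, the value `λ(X,Y) = R(X,Y,X,Y) - R(X,Y,JX,JY)` on orthonormal anti-holomorphic
pairs equals the constant anti-holomorphic sectional curvature `α`. -/
theorem constant_type_iff_constant_antiholomorphic_sectional_curvature
    {V : Type*} [NormedAddCommGroup V] [InnerProductSpace ℝ V] [FiniteDimensional ℝ V]
    {m : ℕ} (hm : 3 ≤ m) (hdim : Module.finrank ℝ V = 2 * m)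
    (J : V →ₗ[ℝ] V)
    (hJiso : ∀ X Y : V, ⟪J X, J Y⟫ = ⟪X, Y⟫)
    (hJ2 : ∀ X : V, J (J X) = -X)
    (R : V →ₗ[ℝ] V →ₗ[ℝ] V →ₗ[ℝ] V →ₗ[ℝ] ℝ)
    (hR1 : ∀ X Y Z U : V, R X Y Z U = -R Y X Z U)
    (hR2 : ∀ X Y Z U : V, R X Y Z U = -R X Y U Z)
    (hR3 : ∀ X Y Z U : V, R X Y Z U = R Z U X Y)
    (hax : ∀ X Y : V, ‖X‖ = 1 → ‖Y‖ = 1 → ⟪X, Y⟫ = 0 → ⟪X, J Y⟫ = 0 →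
      R X Y (J X) (J Y) = 0) :
    ((∀ X Y Z : V, ⟪X, Y⟫ = 0 → ⟪X, J Y⟫ = 0 → ⟪X, Z⟫ = 0 → ⟪X, J Z⟫ = 0 → ‖Y‖ = ‖Z‖ →
        R X Y X Y - R X Y (J X) (J Y) = R X Z X Z - R X Z (J X) (J Z)) ↔
      (∃ α : ℝ, ∀ X Y : V, ‖X‖ = 1 → ‖Y‖ = 1 → ⟪X, Y⟫ = 0 → ⟪X, J Y⟫ = 0 →
        R X Y X Y = α)) ∧
    (∀ α : ℝ, (∀ X Y : V, ‖X‖ = 1 → ‖Y‖ = 1 → ⟪X, Y⟫ = 0 → ⟪X, J Y⟫ = 0 →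
        R X Y X Y = α) →
      ∀ X Y : V, ‖X‖ = 1 → ‖Y‖ = 1 → ⟪X, Y⟫ = 0 → ⟪X, J Y⟫ = 0 →
        R X Y X Y - R X Y (J X) (J Y) = α) :=
  constant_type_iff_constant_antiholomorphic_sectional_curvature_general hm hdim J hJiso hJ2 R hR1
    hR2 hax
end

section
/- Let V be a real inner product space of dimension ≥ 6 with an orthogonal complex structure J, and let R be a curvature-like tensor on V. Suppose that K(X,Y) = K(X,Z) whenever X, Y are orthonormal with ⟨X,JY⟩ = 0 and X, Z are orthonormal with ⟨X,JZ⟩ = 0 (i.e. the anti-holomorphic sectional curvature is the same for all anti-holomorphic sections containing a given vector). Then K(X,Y) = K(Z,U) for any two orthonormal pairs (X,Y) and (Z,U) with ⟨X,JY⟩ = 0 and ⟨Z,JU⟩ = 0; that is, K takes the same value on all anti-holomorphic planes. (This is the chain argument (4.5)–(4.8) in the proof of Theorem 4.1, using that in dimension ≥ 6 one can choose a unit vector U orthogonal to X, JX, Z, JZ.) -/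
/-!
In dimension `≥ 6` the span of `X, JX, Z, JZ` has a nonzero orthogonal complement, so some unit
vector `W` is orthogonal to all four; skewness of `J` then makes `(X, W)`, `(W, X)`, `(W, Z)` and
`(Z, W)` anti-holomorphic pairs. Pointwise constancy at `X`, `W`, `Z` and `K(a,b) = K(b,a)` give
`K(X,Y) = K(X,W) = K(W,X) = K(W,Z) = K(Z,W) = K(Z,U)`.
-/

open Module Submodule

open scoped RealInnerProductSpace InnerProductSpace

theorem exists_norm_eq_one_forall_inner_eq_zero_s1 {𝕜 E : Type*} [RCLike 𝕜] [NormedAddCommGroup E]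
    [InnerProductSpace 𝕜 E] [FiniteDimensional 𝕜 E] {ι : Type*} [Fintype ι] (v : ι → E)
    (h : Fintype.card ι < finrank 𝕜 E) : ∃ w : E, ‖w‖ = 1 ∧ ∀ i, ⟪v i, w⟫_𝕜 = 0 := by
  set S := span 𝕜 (Set.range v)
  have hS : 0 < finrank 𝕜 Sᗮ := by
    have := S.finrank_add_finrank_orthogonal
    have : finrank 𝕜 S ≤ Fintype.card ι := finrank_range_le_card v
    omega
  obtain ⟨w, hwS, hw0⟩ := exists_mem_ne_zero_of_ne_bot (Submodule.one_le_finrank_iff.mp hS)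
  refine ⟨(‖w‖⁻¹ : 𝕜) • w, norm_smul_inv_norm hw0, fun i => ?_⟩
  exact inner_right_of_mem_orthogonal (subset_span (Set.mem_range_self i)) (Sᗮ.smul_mem _ hwS)

section

variable {V : Type*} [NormedAddCommGroup V] [InnerProductSpace ℝ V]

theorem real_inner_apply_right_eq_neg_inner_apply_left {J : V →ₗ[ℝ] V}
    (hJiso : ∀ X Y : V, ⟪J X, J Y⟫ = ⟪X, Y⟫) (hJ2 : ∀ X : V, J (J X) = -X) (a b : V) :
    ⟪a, J b⟫ = -⟪J a, b⟫ := by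
  rw [← hJiso a (J b), hJ2, inner_neg_right]

theorem apply_apply_self_swap_eq {R : V →ₗ[ℝ] V →ₗ[ℝ] V →ₗ[ℝ] V →ₗ[ℝ] ℝ}
    (hR1 : ∀ X Y Z U : V, R X Y Z U = -R Y X Z U) (hR2 : ∀ X Y Z U : V, R X Y Z U = -R X Y U Z)
    (a b : V) : R a b a b = R b a b a := by
  rw [hR1 a b a b, hR2 b a a b, neg_neg]

end

theorem antiholomorphic_sectional_curvature_constant_of_pointed_constant_general
    {V : Type*} [NormedAddCommGroup V] [InnerProductSpace ℝ V] [FiniteDimensional ℝ V]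
    (hdim : 6 ≤ Module.finrank ℝ V)
    (J : V →ₗ[ℝ] V)
    (hJiso : ∀ X Y : V, ⟪J X, J Y⟫ = ⟪X, Y⟫)
    (hJ2 : ∀ X : V, J (J X) = -X)
    (R : V →ₗ[ℝ] V →ₗ[ℝ] V →ₗ[ℝ] V →ₗ[ℝ] ℝ)
    (hR1 : ∀ X Y Z U : V, R X Y Z U = -R Y X Z U)
    (hR2 : ∀ X Y Z U : V, R X Y Z U = -R X Y U Z)
    (hpt : ∀ X Y Z : V, ‖X‖ = 1 → ‖Y‖ = 1 → ‖Z‖ = 1 →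
      ⟪X, Y⟫ = 0 → ⟪X, J Y⟫ = 0 → ⟪X, Z⟫ = 0 → ⟪X, J Z⟫ = 0 →
      R X Y X Y = R X Z X Z) :
    ∀ X Y Z U : V, ‖X‖ = 1 → ‖Y‖ = 1 → ‖Z‖ = 1 → ‖U‖ = 1 →
      ⟪X, Y⟫ = 0 → ⟪X, J Y⟫ = 0 → ⟪Z, U⟫ = 0 → ⟪Z, J U⟫ = 0 →
      R X Y X Y = R Z U Z U := by
  intro X Y Z U hX hY hZ hU hXY hXJY hZU hZJU
  obtain ⟨W, hW, hWorth⟩ := exists_norm_eq_one_forall_inner_eq_zero_s1 (𝕜 := ℝ) ![X, J X, Z, J Z]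
    (by simp only [Fintype.card_fin]; omega)
  have hXW : ⟪X, W⟫ = 0 := hWorth 0
  have hJXW : ⟪J X, W⟫ = 0 := hWorth 1
  have hZW : ⟪Z, W⟫ = 0 := hWorth 2
  have hJZW : ⟪J Z, W⟫ = 0 := hWorth 3
  have hskew := real_inner_apply_right_eq_neg_inner_apply_left hJiso hJ2
  have hswap := apply_apply_self_swap_eq hR1 hR2
  calc R X Y X Y = R X W X W := hpt X Y W hX hY hW hXY hXJY hXW (by rw [hskew, hJXW, neg_zero])
    _ = R W X W X := hswap X W
    _ = R W Z W Z := hpt W X Z hW hX hZ (by rwa [real_inner_comm]) (by rwa [real_inner_comm])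
          (by rwa [real_inner_comm]) (by rwa [real_inner_comm])
    _ = R Z W Z W := hswap W Z
    _ = R Z U Z U := (hpt Z U W hZ hU hW hZU hZJU hZW (by rw [hskew, hJZW, neg_zero])).symm

/-- **The chain argument (4.5)–(4.8) in the proof of Theorem 4.1.**
If the anti-holomorphic sectional curvature `K(X,Y) = R(X,Y,X,Y)` of a curvature-like
tensor `R` on a real inner product space of dimension `≥ 6` with orthogonal complex
structure `J` is the same for all anti-holomorphic sections containing a given vector,
then `K` takes the same value on all anti-holomorphic planes. -/
theorem antiholomorphic_sectional_curvature_constant_of_pointed_constant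
    {V : Type*} [NormedAddCommGroup V] [InnerProductSpace ℝ V] [FiniteDimensional ℝ V]
    (hdim : 6 ≤ Module.finrank ℝ V)
    (J : V →ₗ[ℝ] V)
    (hJiso : ∀ X Y : V, ⟪J X, J Y⟫ = ⟪X, Y⟫)
    (hJ2 : ∀ X : V, J (J X) = -X)
    (R : V →ₗ[ℝ] V →ₗ[ℝ] V →ₗ[ℝ] V →ₗ[ℝ] ℝ)
    (hR1 : ∀ X Y Z U : V, R X Y Z U = -R Y X Z U)
    (hR2 : ∀ X Y Z U : V, R X Y Z U = -R X Y U Z)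
    (hR3 : ∀ X Y Z U : V, R X Y Z U = R Z U X Y)
    (hpt : ∀ X Y Z : V, ‖X‖ = 1 → ‖Y‖ = 1 → ‖Z‖ = 1 →
      ⟪X, Y⟫ = 0 → ⟪X, J Y⟫ = 0 → ⟪X, Z⟫ = 0 → ⟪X, J Z⟫ = 0 →
      R X Y X Y = R X Z X Z) :
    ∀ X Y Z U : V, ‖X‖ = 1 → ‖Y‖ = 1 → ‖Z‖ = 1 → ‖U‖ = 1 →
      ⟪X, Y⟫ = 0 → ⟪X, J Y⟫ = 0 → ⟪Z, U⟫ = 0 → ⟪Z, J U⟫ = 0 →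
      R X Y X Y = R Z U Z U :=
  antiholomorphic_sectional_curvature_constant_of_pointed_constant_general hdim J hJiso hJ2 R hR1
    hR2 hpt
end
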